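/- arXiv:2005.01861 — 2 statements merged into one kernel-verified Lean document; each statement's English description precedes it below -/
import Mathlib

section
/- Let G = (V, E) be a finite simple graph with m edges, and let ≺ be the strict total order on V defined by: u ≺ v iff d_u < d_v, or d_u = d_v and u precedes v in a fixed linear order on V (where d_x denotes the degree of x in G). Then for every vertex v ∈ V, the number of neighbors w of v with v ≺ w is at most √(2m). -/
open Finset

/-- The degree-based order `≺`: `u ≺ v` iff `d_u < d_v`, or `d_u = d_v` and `u` precedes `v`
in the fixed linear order on `V`. -/
def degPrec {V : Type*} [Fintype V] [LinearOrder V] (G : SimpleGraph V)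
    [DecidableRel G.Adj] (u v : V) : Prop :=
  G.degree u < G.degree v ∨ (G.degree u = G.degree v ∧ u < v)

open scoped Classical in
/-- For every vertex `v`, the number of neighbors `w` of `v` with `v ≺ w` is at most `√(2m)`. -/
theorem num_larger_neighbors_le_sqrt_two_m
    {V : Type*} [Fintype V] [LinearOrder V] (G : SimpleGraph V) [DecidableRel G.Adj]
    (m : ℕ) (hm : G.edgeFinset.card = m) (v : V) :
    (((G.neighborFinset v).filter (fun w => degPrec G v w)).card : ℝ)
      ≤ Real.sqrt (2 * m) := by
  set S := (G.neighborFinset v).filter (fun w => degPrec G v w) with hS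
  set k := S.card with hk
  have hkdeg : k ≤ G.degree v := by
    calc k ≤ (G.neighborFinset v).card := card_filter_le _ _
    _ = G.degree v := G.card_neighborFinset_eq_degree v
  have hdegw : ∀ w ∈ S, k ≤ G.degree w := by
    intro w hw
    rw [hS, mem_filter] at hw
    rcases hw.2 with h | h
    · exact le_trans hkdeg (le_of_lt h)
    · exact le_trans hkdeg (le_of_eq h.1)
  have hsum : k * k ≤ ∑ w ∈ S, G.degree w := by
    calc k * k = ∑ _w ∈ S, k := by rw [sum_const, smul_eq_mul, mul_comm]
    _ ≤ ∑ w ∈ S, G.degree w := sum_le_sum hdegw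
  have hsum2 : ∑ w ∈ S, G.degree w ≤ 2 * m := by
    calc ∑ w ∈ S, G.degree w ≤ ∑ w, G.degree w :=
          sum_le_sum_of_subset (subset_univ S)
    _ = 2 * m := by rw [G.sum_degrees_eq_twice_card_edges, hm]
  have hk2 : (k : ℝ) ^ 2 ≤ 2 * m := by
    have : (k * k : ℕ) ≤ 2 * m := le_trans hsum hsum2
    calc (k : ℝ) ^ 2 = ((k * k : ℕ) : ℝ) := by push_cast; ring
    _ ≤ ((2 * m : ℕ) : ℝ) := by exact_mod_cast this
    _ = 2 * m := by push_cast; ring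
  exact (Real.le_sqrt (by positivity) (by positivity)).mpr hk2
end

section
/- Let G be a finite simple graph with m edges, let H be a finite simple graph, and let ψ be a fractional edge-cover of H. Then the number of subgraphs of G isomorphic to H is at most Π_{e ∈ E_H} (2m)^{ψ(e)}; in particular, the number of subgraphs of G isomorphic to H is at most (2m)^{ρ(H)}. -/
open Finset

open scoped Classical in
/-- `ψ` is a fractional edge-cover of `H`: it maps each edge to `[0,1]` and every vertex is
covered with total weight at least `1`. -/
def IsFracEdgeCover {V : Type*} [Fintype V] (H : SimpleGraph V) (ψ : Sym2 V → ℝ) : Prop :=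
  (∀ e ∈ H.edgeFinset, 0 ≤ ψ e ∧ ψ e ≤ 1) ∧
  (∀ v : V, 1 ≤ ∑ e ∈ H.edgeFinset.filter (fun e => v ∈ e), ψ e)

open scoped Classical in
/-- The total weight `Σ_{e ∈ E_H} ψ(e)` of a weighting `ψ`. -/
noncomputable def coverWeight {V : Type*} [Fintype V] (H : SimpleGraph V) (ψ : Sym2 V → ℝ) : ℝ :=
  ∑ e ∈ H.edgeFinset, ψ e

/-- The fractional edge-cover number `ρ(H)`. -/
noncomputable def fracEdgeCoverNum {V : Type*} [Fintype V] (H : SimpleGraph V) : ℝ :=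
  sInf {x : ℝ | ∃ ψ : Sym2 V → ℝ, IsFracEdgeCover H ψ ∧ x = coverWeight H ψ}

/-!
Every copy of `H` in `G` is the image of an injective homomorphism `W → V`, so it suffices to
bound the number of maps sending edges of `H` to edges of `G`. These are counted by deleting the
vertices of `H` one at a time while carrying a weight `deg (f v) ^ β v` on the remaining
vertices. When `w` is deleted, its image `x` ranges over the common neighbourhood `N` of the
images of its remaining neighbours `u`. Since `∑ x, deg x = 2m`, Hölder's inequality gives
`∑ x ∈ N, deg x ^ β w ≤ (2m) ^ β w * #N ^ (∑ u, ψ (w u))` as soon as `β w + ∑ u, ψ (w u) ≥ 1`,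
and this is exactly the cover condition at `w`. As `#N ≤ deg (f u)`, the factor `#N ^ ψ (w u)`
is passed on to `u` by raising its weight `β u` by `ψ (w u)`.
-/

open Real Function

theorem Finset.sum_rpow_le_card_rpow_mul_sum_rpow {ι : Type*} (N : Finset ι) {d : ι → ℝ}
    (hd : ∀ x, 0 ≤ d x) {b : ℝ} (hb₀ : 0 ≤ b) (hb₁ : b ≤ 1) :
    ∑ x ∈ N, d x ^ b ≤ (#N : ℝ) ^ (1 - b) * (∑ x ∈ N, d x) ^ b := by
  rcases hb₀.eq_or_lt with rfl | hb
  · simp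
  have h := inner_le_weight_mul_Lp_of_nonneg N (p := b⁻¹) ((one_le_inv₀ hb).2 hb₁) (fun _ => 1)
    (fun x => d x ^ b) (fun _ => zero_le_one) (fun x => rpow_nonneg (hd x) b)
  simpa [inv_inv, ← rpow_mul (hd _), hb.ne'] using h

theorem Finset.sum_rpow_le_rpow_sum {ι : Type*} (N : Finset ι) {d : ι → ℝ}
    (hd : ∀ x ∈ N, 0 ≤ d x) {b : ℝ} (hb : 1 ≤ b) :
    ∑ x ∈ N, d x ^ b ≤ (∑ x ∈ N, d x) ^ b := by
  have hS : 0 ≤ ∑ x ∈ N, d x := sum_nonneg hd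
  have hsplit : ∀ y : ℝ, 0 ≤ y → y ^ b = y * y ^ (b - 1) := fun y hy => by
    rw [← rpow_one_add' hy (by linarith), add_sub_cancel]
  calc ∑ x ∈ N, d x ^ b ≤ ∑ x ∈ N, d x * (∑ x ∈ N, d x) ^ (b - 1) := by
        refine sum_le_sum fun x hx => ?_
        rw [hsplit _ (hd x hx)]
        have := hd x hx
        gcongr
        exact single_le_sum hd hx
    _ = (∑ x ∈ N, d x) ^ b := by rw [← sum_mul, ← hsplit _ hS]

theorem Finset.sum_rpow_le_rpow_mul_card_rpow {ι : Type*} (N : Finset ι) {d : ι → ℝ}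
    (hd : ∀ x, 0 ≤ d x) {M a b : ℝ} (hM : ∑ x ∈ N, d x ≤ M) (ha : 0 ≤ a) (hb : 0 ≤ b)
    (hab : 1 ≤ a + b) :
    ∑ x ∈ N, d x ^ b ≤ M ^ b * (#N : ℝ) ^ a := by
  have hS : 0 ≤ ∑ x ∈ N, d x := sum_nonneg fun x _ => hd x
  rcases N.eq_empty_or_nonempty with rfl | hN
  · simp only [sum_empty]
    positivity
  have hM₀ : 0 ≤ M := hS.trans hM
  have hN : (1 : ℝ) ≤ #N := by exact_mod_cast hN.card_pos
  rcases le_total b 1 with hb₁ | hb₁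
  · calc ∑ x ∈ N, d x ^ b ≤ (#N : ℝ) ^ (1 - b) * (∑ x ∈ N, d x) ^ b :=
          N.sum_rpow_le_card_rpow_mul_sum_rpow hd hb hb₁
      _ ≤ (#N : ℝ) ^ a * M ^ b := by
          gcongr
          linarith
      _ = M ^ b * (#N : ℝ) ^ a := mul_comm _ _
  · calc ∑ x ∈ N, d x ^ b ≤ (∑ x ∈ N, d x) ^ b := N.sum_rpow_le_rpow_sum (fun x _ => hd x) hb₁
      _ ≤ M ^ b := by gcongr
      _ ≤ M ^ b * (#N : ℝ) ^ a := le_mul_of_one_le_right (by positivity) (one_le_rpow hN ha)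

theorem le_rpow_csInf {S : Set ℝ} (hne : S.Nonempty) (hS : ∀ x ∈ S, 0 ≤ x) {M c : ℝ}
    (hM : M = 0 ∨ 1 ≤ M) (hc : ∀ x ∈ S, c ≤ M ^ x) : c ≤ M ^ sInf S := by
  have hbdd : BddBelow S := ⟨0, hS⟩
  obtain ⟨x₀, hx₀⟩ := hne
  rcases hM with rfl | hM
  · rcases (le_csInf ⟨x₀, hx₀⟩ hS).eq_or_lt with h | h
    · rw [← h, rpow_zero]
      exact (hc x₀ hx₀).trans (zero_rpow_le_one x₀)
    · rw [zero_rpow h.ne']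
      simpa [zero_rpow ((h.trans_le (csInf_le hbdd hx₀)).ne')] using hc x₀ hx₀
  · rw [(monotone_rpow_of_base_ge_one hM).map_csInf_of_continuousAt
      (continuousAt_const_rpow (by linarith)) ⟨x₀, hx₀⟩ hbdd]
    exact le_csInf ⟨_, x₀, hx₀, rfl⟩ (by rintro _ ⟨x, hx, rfl⟩; exact hc x hx)

theorem Fintype.sum_sum_update {ι α M : Type*} [Fintype ι] [DecidableEq ι] [Fintype α]
    [AddCommMonoid M] (i : ι) (F : (ι → α) → M) :
    ∑ f : ι → α, ∑ a : α, F (update f i a) = Fintype.card α • ∑ f, F f := by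
  let e : (ι → α) × α ≃ (ι → α) × α :=
    { toFun := fun p => (update p.1 i p.2, p.1 i)
      invFun := fun p => (update p.1 i p.2, p.1 i)
      left_inv := fun p => by simp
      right_inv := fun p => by simp }
  rw [← Fintype.sum_prod_type', Fintype.sum_equiv e (fun p => F (update p.1 i p.2)) (fun p => F p.1)
    (fun _ => rfl), Fintype.sum_prod_type]
  simp [Finset.smul_sum]

theorem Finset.card_filter_mem_eq_one_of_mem_sym2_insert {W : Type*} [DecidableEq W]
    {s : Finset W} {w : W} (hw : w ∉ s) {e : Sym2 W} (he : e ∈ (insert w s).sym2) (hwe : w ∈ e)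
    (hdiag : ¬ e.IsDiag) : #{v ∈ s | v ∈ e} = 1 := by
  induction e using Sym2.ind with
  | _ a b =>
  simp only [mem_sym2_iff, Sym2.mem_iff, forall_eq_or_imp, forall_eq, mem_insert,
    Sym2.mk_isDiag_iff] at he hwe hdiag
  rw [card_eq_one]
  rcases hwe with rfl | rfl
  · exact ⟨b, by ext v; grind⟩
  · exact ⟨a, by ext v; grind⟩

theorem Finset.sum_sum_filter_mem_of_subset_sym2_insert {W M : Type*} [DecidableEq W]
    [AddCommMonoid M] {s : Finset W} {w : W} (hw : w ∉ s) {F : Finset (Sym2 W)}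
    (hF : F ⊆ (insert w s).sym2) (hwF : ∀ e ∈ F, w ∈ e) (hdiag : ∀ e ∈ F, ¬ e.IsDiag)
    (g : Sym2 W → M) :
    ∑ v ∈ s, ∑ e ∈ F with v ∈ e, g e = ∑ e ∈ F, g e := by
  simp_rw [sum_filter]
  rw [sum_comm]
  refine sum_congr rfl fun e he => ?_
  rw [← sum_filter, sum_const, card_filter_mem_eq_one_of_mem_sym2_insert hw (hF he) (hwF e he)
    (hdiag e he), one_smul]

theorem Finset.filter_notMem_subset_sym2 {W : Type*} [DecidableEq W] {s : Finset W} {w : W}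
    {E : Finset (Sym2 W)} (hE : E ⊆ (insert w s).sym2) : {e ∈ E | w ∉ e} ⊆ s.sym2 := by
  intro e he
  rw [mem_filter] at he
  refine mem_sym2_iff.2 fun v hv => ?_
  exact (mem_insert.1 (mem_sym2_iff.1 (hE he.1) v hv)).resolve_left fun h => he.2 (h ▸ hv)

theorem SimpleGraph.ncard_setOf_iso_eq_copyCount {V W : Type*} [Fintype V] (G : SimpleGraph V)
    (H : SimpleGraph W) :
    {G' : G.Subgraph | Nonempty (G'.coe ≃g H)}.ncard = G.copyCount H := by
  classical
  rw [copyCount, ← Set.ncard_coe_finset, coe_filter]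
  congr with G'
  simp only [mem_univ, true_and]
  exact ⟨fun ⟨e⟩ => ⟨e.symm⟩, fun ⟨e⟩ => ⟨e.symm⟩⟩

namespace SimpleGraph

variable {V : Type*} [Fintype V] (G : SimpleGraph V) [DecidableRel G.Adj]

theorem sum_degree_le_two_mul_card_edgeFinset (N : Finset V) :
    ∑ x ∈ N, (G.degree x : ℝ) ≤ 2 * #G.edgeFinset := by
  have h : ∑ x, (G.degree x : ℝ) = 2 * #G.edgeFinset := by
    exact_mod_cast G.sum_degrees_eq_twice_card_edges
  exact h ▸ sum_le_sum_of_subset_of_nonneg (subset_univ N) fun _ _ _ => Nat.cast_nonneg _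

theorem sum_degree_rpow_le_of_subset_neighborFinset {ι : Type*} {N : Finset V} {I : Finset ι}
    {y : ι → V} {α : ι → ℝ} (hα : ∀ i ∈ I, 0 ≤ α i)
    (hN : ∀ i ∈ I, α i ≠ 0 → N ⊆ G.neighborFinset (y i)) {b : ℝ} (hb : 0 ≤ b)
    (hcov : 1 ≤ ∑ i ∈ I, α i + b) :
    ∑ x ∈ N, (G.degree x : ℝ) ^ b
      ≤ (2 * #G.edgeFinset : ℝ) ^ b * ∏ i ∈ I, (G.degree (y i) : ℝ) ^ α i := by
  calc ∑ x ∈ N, (G.degree x : ℝ) ^ b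
      ≤ (2 * #G.edgeFinset : ℝ) ^ b * (#N : ℝ) ^ ∑ i ∈ I, α i :=
        N.sum_rpow_le_rpow_mul_card_rpow (fun _ => Nat.cast_nonneg _)
          (G.sum_degree_le_two_mul_card_edgeFinset N) (sum_nonneg hα) hb hcov
    _ = (2 * #G.edgeFinset : ℝ) ^ b * ∏ i ∈ I, (#N : ℝ) ^ α i := by
        rw [rpow_sum_of_nonneg (Nat.cast_nonneg _) hα]
    _ ≤ (2 * #G.edgeFinset : ℝ) ^ b * ∏ i ∈ I, (G.degree (y i) : ℝ) ^ α i := by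
        refine mul_le_mul_of_nonneg_left (prod_le_prod (fun i _ => by positivity) fun i hi => ?_)
          (by positivity)
        by_cases hαi : α i = 0
        · simp [hαi]
        · rw [← card_neighborFinset_eq_degree]
          gcongr
          · exact hα i hi
          exact hN i hi hαi

variable {W : Type*}

noncomputable def degreeWeight (E : Finset (Sym2 W)) (s : Finset W) (β : W → ℝ) (f : W → V) : ℝ :=
  if ∀ e ∈ E, e.map f ∈ G.edgeSet then ∏ v ∈ s, (G.degree (f v) : ℝ) ^ β v else 0

theorem degreeWeight_nonneg (E : Finset (Sym2 W)) (s : Finset W) (β : W → ℝ) (f : W → V) :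
    0 ≤ G.degreeWeight E s β f := by
  unfold degreeWeight
  split_ifs <;> positivity

theorem prod_rpow_mul_degreeWeight {E : Finset (Sym2 W)} {s : Finset W} {β α : W → ℝ}
    (hβ : ∀ v ∈ s, 0 ≤ β v) (hα : ∀ v ∈ s, 0 ≤ α v) (f : W → V) :
    (∏ v ∈ s, (G.degree (f v) : ℝ) ^ α v) * G.degreeWeight E s β f
      = G.degreeWeight E s (fun v => β v + α v) f := by
  unfold degreeWeight
  split_ifs
  · rw [← prod_mul_distrib]
    refine prod_congr rfl fun v hv => ?_
    rw [rpow_add_of_nonneg (Nat.cast_nonneg _) (hβ v hv) (hα v hv), mul_comm]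
  · rw [mul_zero]

variable [DecidableEq W]

theorem filter_map_update_mem_edgeSet_subset_neighborFinset {w v : W} (hwv : w ≠ v)
    {F : Finset (Sym2 W)} (hF : s(w, v) ∈ F) (f : W → V) :
    ({x | ∀ e ∈ F, e.map (update f w x) ∈ G.edgeSet} : Finset V) ⊆ G.neighborFinset (f v) := by
  intro x hx
  have := (mem_filter.1 hx).2 _ hF
  rw [Sym2.map_mk, update_self, update_of_ne hwv.symm, mem_edgeSet] at this
  exact (mem_neighborFinset _ _ _).2 this.symm

theorem degreeWeight_update (E : Finset (Sym2 W)) {s : Finset W} {w : W} (hw : w ∉ s)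
    (β : W → ℝ) (f : W → V) (x : V) :
    G.degreeWeight E (insert w s) β (update f w x)
      = G.degreeWeight {e ∈ E | w ∈ e} {w} β (update f w x) *
        G.degreeWeight {e ∈ E | w ∉ e} s β f := by
  have hE' : ∀ e ∈ {e ∈ E | w ∉ e}, e.map (update f w x) = e.map f := fun e he =>
    Sym2.map_congr fun v hv => update_of_ne (fun (h : v = w) => (mem_filter.1 he).2 (h ▸ hv)) _ _
  have hiff : (∀ e ∈ E, e.map (update f w x) ∈ G.edgeSet) ↔
      (∀ e ∈ {e ∈ E | w ∈ e}, e.map (update f w x) ∈ G.edgeSet) ∧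
        ∀ e ∈ {e ∈ E | w ∉ e}, e.map f ∈ G.edgeSet := by
    simp only [mem_filter]
    constructor
    · intro h
      exact ⟨fun e he => h e he.1, fun e he => hE' e (mem_filter.2 he) ▸ h e he.1⟩
    · rintro ⟨h₁, h₂⟩ e he
      by_cases hwe : w ∈ e
      · exact h₁ e ⟨he, hwe⟩
      · exact (hE' e (mem_filter.2 ⟨he, hwe⟩)).symm ▸ h₂ e ⟨he, hwe⟩
  have hprod : ∏ v ∈ s, (G.degree (update f w x v) : ℝ) ^ β v
      = ∏ v ∈ s, (G.degree (f v) : ℝ) ^ β v :=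
    prod_congr rfl fun v hv => by rw [update_of_ne (ne_of_mem_of_not_mem hv hw)]
  unfold degreeWeight
  rw [prod_insert hw, prod_singleton, update_self, hprod, if_congr hiff rfl rfl, ite_and]
  split_ifs <;> simp

theorem sum_degreeWeight_update_le {s : Finset W} {w : W} (hw : w ∉ s)
    {E : Finset (Sym2 W)} (hE : E ⊆ (insert w s).sym2) (hdiag : ∀ e ∈ E, ¬ e.IsDiag)
    {ψ : Sym2 W → ℝ} (hψ : ∀ e ∈ E, 0 ≤ ψ e) {β : W → ℝ} (hβ : ∀ v ∈ insert w s, 0 ≤ β v)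
    (hcov : 1 ≤ ∑ e ∈ E with w ∈ e, ψ e + β w) (f : W → V) :
    ∑ x, G.degreeWeight E (insert w s) β (update f w x)
      ≤ (2 * #G.edgeFinset : ℝ) ^ β w * G.degreeWeight {e ∈ E | w ∉ e} s
          (fun v => β v + ∑ e ∈ {e ∈ E | w ∈ e} with v ∈ e, ψ e) f := by
  set N : Finset V := {x | ∀ e ∈ {e ∈ E | w ∈ e}, e.map (update f w x) ∈ G.edgeSet}
  have hEw : {e ∈ E | w ∈ e} ⊆ (insert w s).sym2 := (filter_subset _ _).trans hE
  have hα : ∀ v ∈ s, 0 ≤ ∑ e ∈ {e ∈ E | w ∈ e} with v ∈ e, ψ e := fun v _ =>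
    sum_nonneg fun e he => hψ e (mem_filter.1 (mem_filter.1 he).1).1
  have hN : ∀ v ∈ s, ∑ e ∈ {e ∈ E | w ∈ e} with v ∈ e, ψ e ≠ 0 →
      N ⊆ G.neighborFinset (f v) := by
    intro v hv hne
    obtain ⟨e, he, -⟩ := exists_ne_zero_of_sum_ne_zero hne
    have hwv : w ≠ v := (ne_of_mem_of_not_mem hv hw).symm
    rw [mem_filter, mem_filter] at he
    obtain rfl : e = s(w, v) := (Sym2.mem_and_mem_iff hwv).1 ⟨he.1.2, he.2⟩
    exact G.filter_map_update_mem_edgeSet_subset_neighborFinset hwv (mem_filter.2 he.1) f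
  have hcovw : 1 ≤ ∑ v ∈ s, ∑ e ∈ {e ∈ E | w ∈ e} with v ∈ e, ψ e + β w := by
    rwa [sum_sum_filter_mem_of_subset_sym2_insert hw hEw (fun e he => (mem_filter.1 he).2)
      (fun e he => hdiag e (mem_filter.1 he).1)]
  have hN_sum : ∑ x, G.degreeWeight {e ∈ E | w ∈ e} {w} β (update f w x)
      = ∑ x ∈ N, (G.degree x : ℝ) ^ β w := by
    simp only [degreeWeight, prod_singleton, N, sum_filter]
    exact sum_congr rfl fun x _ => by rw [update_self]
  calc ∑ x, G.degreeWeight E (insert w s) β (update f w x)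
      = (∑ x ∈ N, (G.degree x : ℝ) ^ β w) * G.degreeWeight {e ∈ E | w ∉ e} s β f := by
        simp_rw [G.degreeWeight_update E hw, ← sum_mul, hN_sum]
    _ ≤ ((2 * #G.edgeFinset : ℝ) ^ β w *
          ∏ v ∈ s, (G.degree (f v) : ℝ) ^ ∑ e ∈ {e ∈ E | w ∈ e} with v ∈ e, ψ e) *
        G.degreeWeight {e ∈ E | w ∉ e} s β f := by
        gcongr
        · exact G.degreeWeight_nonneg _ _ _ _
        exact G.sum_degree_rpow_le_of_subset_neighborFinset hα hN (hβ w (mem_insert_self w s))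
          hcovw
    _ = _ := by
        rw [mul_assoc, G.prod_rpow_mul_degreeWeight (fun v hv => hβ v (mem_insert_of_mem hv)) hα]

theorem sum_degreeWeight_insert_le [Fintype W] {s : Finset W} {w : W} (hw : w ∉ s)
    {E : Finset (Sym2 W)} (hE : E ⊆ (insert w s).sym2) (hdiag : ∀ e ∈ E, ¬ e.IsDiag)
    {ψ : Sym2 W → ℝ} (hψ : ∀ e ∈ E, 0 ≤ ψ e) {β : W → ℝ} (hβ : ∀ v ∈ insert w s, 0 ≤ β v)
    (hcov : 1 ≤ ∑ e ∈ E with w ∈ e, ψ e + β w) {B : ℝ} (hB₀ : 0 ≤ B)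
    (hB : ∑ f : W → V, G.degreeWeight {e ∈ E | w ∉ e} s
          (fun v => β v + ∑ e ∈ {e ∈ E | w ∈ e} with v ∈ e, ψ e) f
        ≤ (Fintype.card V : ℝ) ^ #sᶜ * (2 * #G.edgeFinset : ℝ) ^ B) :
    ∑ f : W → V, G.degreeWeight E (insert w s) β f
      ≤ (Fintype.card V : ℝ) ^ #(insert w s)ᶜ * (2 * #G.edgeFinset : ℝ) ^ (β w + B) := by
  rcases isEmpty_or_nonempty V with hV | hV
  · have : IsEmpty (W → V) := ⟨fun f => hV.false (f w)⟩
    simp only [univ_eq_empty, sum_empty]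
    positivity
  have hC : (0 : ℝ) < Fintype.card V := Nat.cast_pos.2 Fintype.card_pos
  refine le_of_mul_le_mul_left ?_ hC
  rw [← nsmul_eq_mul, ← Fintype.sum_sum_update w]
  refine (sum_le_sum fun f _ => G.sum_degreeWeight_update_le hw hE hdiag hψ hβ hcov f).trans ?_
  rw [← mul_sum]
  refine (mul_le_mul_of_nonneg_left hB (by positivity)).trans_eq ?_
  rw [rpow_add_of_nonneg (by positivity) (hβ w (mem_insert_self w s)) hB₀,
    ← card_erase_add_one (mem_compl.2 hw), ← compl_insert, pow_succ]
  ring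

theorem sum_degreeWeight_le [Fintype W] {ψ : Sym2 W → ℝ} (s : Finset W)
    {E : Finset (Sym2 W)} {β : W → ℝ} (hψ : ∀ e ∈ E, 0 ≤ ψ e) (hE : E ⊆ s.sym2)
    (hdiag : ∀ e ∈ E, ¬ e.IsDiag) (hβ : ∀ v ∈ s, 0 ≤ β v)
    (hcov : ∀ v ∈ s, 1 ≤ ∑ e ∈ E with v ∈ e, ψ e + β v) :
    ∑ f : W → V, G.degreeWeight E s β f
      ≤ (Fintype.card V : ℝ) ^ #sᶜ * (2 * #G.edgeFinset : ℝ) ^ (∑ e ∈ E, ψ e + ∑ v ∈ s, β v) := by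
  induction s using Finset.induction_on generalizing E β with
  | empty =>
    obtain rfl : E = ∅ := subset_empty.1 (by simpa using hE)
    simp [degreeWeight]
  | insert w s hw ih =>
    set β' : W → ℝ := fun v => β v + ∑ e ∈ {e ∈ E | w ∈ e} with v ∈ e, ψ e
    have hα : ∑ v ∈ s, ∑ e ∈ {e ∈ E | w ∈ e} with v ∈ e, ψ e = ∑ e ∈ E with w ∈ e, ψ e :=
      sum_sum_filter_mem_of_subset_sym2_insert hw ((filter_subset _ _).trans hE)
        (fun e he => (mem_filter.1 he).2) (fun e he => hdiag e (mem_filter.1 he).1) ψ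
    have hψ' : ∀ e ∈ {e ∈ E | w ∉ e}, 0 ≤ ψ e := fun e he => hψ e (mem_filter.1 he).1
    have hβ' : ∀ v ∈ s, 0 ≤ β' v := fun v hv =>
      add_nonneg (hβ v (mem_insert_of_mem hv))
        (sum_nonneg fun e he => hψ e (mem_filter.1 (mem_filter.1 he).1).1)
    have hcov' : ∀ v ∈ s, 1 ≤ ∑ e ∈ {e ∈ E | w ∉ e} with v ∈ e, ψ e + β' v := by
      intro v hv
      have hsplit := sum_filter_add_sum_filter_not {e ∈ E | v ∈ e} (w ∈ ·) ψ
      rw [filter_comm] at hsplit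
      simp only [β']
      rw [filter_comm]
      linarith [hcov v (mem_insert_of_mem hv)]
    have hexp : β w + (∑ e ∈ {e ∈ E | w ∉ e}, ψ e + ∑ v ∈ s, β' v)
        = ∑ e ∈ E, ψ e + ∑ v ∈ insert w s, β v := by
      have := sum_filter_add_sum_filter_not E (w ∈ ·) ψ
      simp only [β', sum_add_distrib, hα, sum_insert hw]
      linarith
    rw [← hexp]
    exact G.sum_degreeWeight_insert_le hw hE hdiag hψ hβ (hcov w (mem_insert_self w s))
      (add_nonneg (sum_nonneg hψ') (sum_nonneg hβ'))
      (ih hψ' (filter_notMem_subset_sym2 hE) (fun e he => hdiag e (mem_filter.1 he).1) hβ' hcov')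

variable [Fintype W] (H : SimpleGraph W) [DecidableRel H.Adj]

theorem card_hom_le (ψ : Sym2 W → ℝ) (hψ : ∀ e ∈ H.edgeFinset, 0 ≤ ψ e)
    (hcov : ∀ v, 1 ≤ ∑ e ∈ H.edgeFinset with v ∈ e, ψ e) :
    (#{f : W → V | ∀ e ∈ H.edgeFinset, e.map f ∈ G.edgeSet} : ℝ)
      ≤ (2 * #G.edgeFinset : ℝ) ^ ∑ e ∈ H.edgeFinset, ψ e := by
  have h := G.sum_degreeWeight_le univ (E := H.edgeFinset) (β := 0) hψ
    (fun e _ => mem_sym2_iff.2 fun v _ => mem_univ v) (fun e he => not_isDiag_of_mem_edgeFinset he)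
    (fun _ _ => le_rfl) (by simpa using hcov)
  simpa [degreeWeight, sum_boole] using h

theorem labelledCopyCount_le_card_hom :
    G.labelledCopyCount H ≤ #{f : W → V | ∀ e ∈ H.edgeFinset, e.map f ∈ G.edgeSet} := by
  set T : Finset (W → V) := {f | ∀ e ∈ H.edgeFinset, e.map f ∈ G.edgeSet}
  rw [labelledCopyCount, ← Fintype.card_coe T]
  convert Fintype.card_le_of_injective (fun c : Copy H G => (⟨c, ?_⟩ : T)) fun c c' h => ?_
  · simpa [T] using fun e he => c.toHom.map_mem_edgeSet he
  · exact Copy.ext (congrFun (congrArg Subtype.val h))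

end SimpleGraph

open SimpleGraph in
open scoped Classical in
theorem IsFracEdgeCover.ncard_copies_le {V W : Type*} [Fintype V] [Fintype W]
    (G : SimpleGraph V) {H : SimpleGraph W} {ψ : Sym2 W → ℝ} (hψ : IsFracEdgeCover H ψ) :
    ({G' : G.Subgraph | Nonempty (G'.coe ≃g H)}.ncard : ℝ)
      ≤ (2 * #G.edgeFinset : ℝ) ^ coverWeight H ψ := by
  rw [G.ncard_setOf_iso_eq_copyCount]
  calc (G.copyCount H : ℝ) ≤ #{f : W → V | ∀ e ∈ H.edgeFinset, e.map f ∈ G.edgeSet} := by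
        exact_mod_cast copyCount_le_labelledCopyCount.trans (G.labelledCopyCount_le_card_hom H)
    _ ≤ _ := G.card_hom_le H ψ (fun e he => (hψ.1 e he).1) hψ.2

open scoped Classical in
/-- The number of subgraphs of `G` isomorphic to `H` is at most `Π_{e ∈ E_H} (2m)^{ψ(e)}`
for any fractional edge-cover `ψ` of `H`; in particular it is at most `(2m)^{ρ(H)}`. -/
theorem card_copies_le_of_fracEdgeCover
    {V W : Type*} [Fintype V] [Fintype W]
    (G : SimpleGraph V) (H : SimpleGraph W) (m : ℕ) (hm : G.edgeFinset.card = m)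
    (ψ : Sym2 W → ℝ) (hψ : IsFracEdgeCover H ψ) :
    ({G' : G.Subgraph | Nonempty (G'.coe ≃g H)}.ncard : ℝ)
        ≤ ∏ e ∈ H.edgeFinset, (2 * m : ℝ) ^ (ψ e) ∧
    ({G' : G.Subgraph | Nonempty (G'.coe ≃g H)}.ncard : ℝ)
        ≤ (2 * m : ℝ) ^ (fracEdgeCoverNum H) := by
  subst hm
  refine ⟨?_, ?_⟩
  · rw [← rpow_sum_of_nonneg (by positivity) fun e he => (hψ.1 e he).1]
    exact hψ.ncard_copies_le G
  · unfold fracEdgeCoverNum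
    apply le_rpow_csInf
    · exact ⟨_, ψ, hψ, rfl⟩
    · rintro _ ⟨ψ', hψ', rfl⟩
      exact sum_nonneg fun e he => (hψ'.1 e he).1
    · rcases Nat.eq_zero_or_pos #G.edgeFinset with h | h
      · simp [h]
      · right
        have : (1 : ℝ) ≤ #G.edgeFinset := by exact_mod_cast h
        linarith
    · rintro _ ⟨ψ', hψ', rfl⟩
      exact hψ'.ncard_copies_le G
end
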